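/- arXiv:2006.02761 — 2 statements merged into one kernel-verified Lean document; each statement's English description precedes it below -/
import Mathlib

section
/- Let Γ be a left A-module. Γ is finitely generated and projective if and only if there exist a right A-module Σ, an A-bilinear evaluation map ev : Γ ⊗_A Σ → A, and an A-bimodule map coev : A → Σ ⊗_A Γ such that (ev ⊗ id_Γ) ∘ (id_Γ ⊗ coev) = id_Γ and (id_Σ ⊗ ev) ∘ (coev ⊗ id_Σ) = id_Σ (under the canonical identifications Γ ≅ Γ ⊗_A A and Σ ≅ A ⊗_A Σ). -/
/-!
A right dual is the same thing as a finite dual basis `fᵢ : Γ →ₗ[A] A`, `γᵢ ∈ Γ` with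
`∑ fᵢ x • γᵢ = x`: from a right dual take `fᵢ = ev (·) σᵢ`; from a dual basis take
`Σ = Γ →ₗ[A] A` with the evaluation pairing and coevaluation `∑ fᵢ ⊗ γᵢ`. A dual basis in turn
is a factorisation of `id_Γ` through `Aⁿ`, i.e. it exhibits `Γ` as a direct summand of a finite
free module.
-/

open scoped TensorProduct

namespace Stmt5

section Bal

variable (A : Type*) [Ring A]
variable (S : Type*) [AddCommGroup S] [Module Aᵐᵒᵖ S]
variable (Γ : Type*) [AddCommGroup Γ] [Module A Γ]

/-- The balancing submodule defining the balanced tensor product `Σ ⊗_A Γ` of a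
right `A`-module `Σ` with a left `A`-module `Γ` (realized as the usual quotient
of the tensor product of abelian groups). -/
def balRel : Submodule ℤ (S ⊗[ℤ] Γ) :=
  Submodule.span ℤ {x | ∃ (σ : S) (a : A) (s : Γ),
    x = (MulOpposite.op a • σ) ⊗ₜ[ℤ] s - σ ⊗ₜ[ℤ] (a • s)}

/-- The balanced tensor product `Σ ⊗_A Γ`. -/
def Bal := (S ⊗[ℤ] Γ) ⧸ balRel A S Γ

noncomputable instance : AddCommGroup (Bal A S Γ) :=
  Submodule.Quotient.addCommGroup _

/-- The canonical projection onto the balanced tensor product. -/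
def balMk : S ⊗[ℤ] Γ → Bal A S Γ := Submodule.Quotient.mk

end Bal

universe u

/-- The data of a right dual (in the sense of rigid monoidal categories) for a left
`A`-module `Γ`: a right `A`-module `Σ`, an `A`-bilinear evaluation pairing
`ev : Γ ⊗_A Σ → A` (left `A`-linear in the first argument and right `A`-linear in
the second) and a coevaluation element `cv = coev(1) ∈ Σ ⊗_A Γ`, written as a
finite sum `∑ i, σᵢ ⊗ γᵢ`, satisfying the two triangle (snake) identities
`(ev ⊗ id_Γ) ∘ (id_Γ ⊗ coev) = id_Γ` and `(id_Σ ⊗ ev) ∘ (coev ⊗ id_Σ) = id_Σ`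
(under the canonical identifications `Γ ≅ Γ ⊗_A A` and `Σ ≅ A ⊗_A Σ`). -/
structure RightDualData (A Γ : Type u) [Ring A] [AddCommGroup Γ] [Module A Γ] where
  S : Type u
  [addS : AddCommGroup S]
  [modS : Module Aᵐᵒᵖ S]
  ev : Γ →+ S →+ A
  ev_left : ∀ (a : A) (γ : Γ) (σ : S), ev (a • γ) σ = a * ev γ σ
  ev_right : ∀ (a : A) (γ : Γ) (σ : S), ev γ (MulOpposite.op a • σ) = ev γ σ * a
  n : ℕ
  σv : Fin n → S
  γv : Fin n → Γ
  cv : Bal A S Γ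
  cv_eq : cv = ∑ i, balMk A S Γ (σv i ⊗ₜ[ℤ] γv i)
  triangle₁ : ∀ γ : Γ, ∑ i, ev γ (σv i) • γv i = γ
  triangle₂ : ∀ σ : S, ∑ i, MulOpposite.op (ev (γv i) σ) • σv i = σ

section DualBasis

variable {A Γ : Type*} [Ring A] [AddCommGroup Γ] [Module A Γ]

theorem exists_dualBasis_of_finite_projective [Module.Finite A Γ] [Module.Projective A Γ] :
    ∃ (n : ℕ) (f : Fin n → Γ →ₗ[A] A) (γ : Fin n → Γ), ∀ x, ∑ i, f i x • γ i = x := by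
  obtain ⟨n, π, hπ⟩ := Module.Finite.exists_fin' A Γ
  obtain ⟨s, hs⟩ := Module.projective_lifting_property π LinearMap.id hπ
  refine ⟨n, fun i => (LinearMap.proj i).comp s, fun i => π fun j => if i = j then 1 else 0,
    fun x => ?_⟩
  calc ∑ i, s x i • π (fun j => if i = j then 1 else 0) = π (s x) :=
        (π.pi_apply_eq_sum_univ (s x)).symm
    _ = x := LinearMap.congr_fun hs x

theorem finite_projective_of_dualBasis {ι : Type*} [Fintype ι] (f : ι → Γ →ₗ[A] A) (γ : ι → Γ)
    (h : ∀ x, ∑ i, f i x • γ i = x) : Module.Finite A Γ ∧ Module.Projective A Γ := by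
  have hsplit : (Fintype.linearCombination A γ).comp (LinearMap.pi f) = LinearMap.id :=
    LinearMap.ext h
  exact ⟨.of_surjective _ (LinearMap.surjective_of_comp_eq_id _ _ hsplit), .of_split _ _ hsplit⟩

end DualBasis

namespace RightDualData

variable {A Γ : Type u} [Ring A] [AddCommGroup Γ] [Module A Γ]

def coord (d : RightDualData A Γ) (i : Fin d.n) : Γ →ₗ[A] A where
  toFun x := d.ev x (d.σv i)
  map_add' x y := by simp
  map_smul' a x := d.ev_left a x (d.σv i)

noncomputable def ofDualBasis {n : ℕ} (f : Fin n → Γ →ₗ[A] A) (γ : Fin n → Γ)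
    (h : ∀ x, ∑ i, f i x • γ i = x) : RightDualData A Γ where
  S := Γ →ₗ[A] A
  ev := LinearMap.toAddMonoidHom'.flip
  ev_left a x σ := σ.map_smul a x
  ev_right _ _ _ := rfl
  n := n
  σv := f
  γv := γ
  cv := ∑ i, balMk A (Γ →ₗ[A] A) Γ (f i ⊗ₜ[ℤ] γ i)
  cv_eq := rfl
  triangle₁ := h
  triangle₂ σ := by
    ext x
    conv_rhs => rw [← h x]
    simp [MulOpposite.smul_eq_mul_unop]

end RightDualData

theorem finite_projective_iff_rigid_general {A Γ : Type u}
    [Ring A] [AddCommGroup Γ] [Module A Γ] :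
    (Module.Finite A Γ ∧ Module.Projective A Γ) ↔ Nonempty (RightDualData A Γ) := by
  constructor
  · rintro ⟨_, _⟩
    obtain ⟨n, f, γ, h⟩ := exists_dualBasis_of_finite_projective (A := A) (Γ := Γ)
    exact ⟨.ofDualBasis f γ h⟩
  · rintro ⟨d⟩
    exact finite_projective_of_dualBasis d.coord d.γv d.triangle₁

/-- A left `A`-module `Γ` is finitely generated and projective if and only if it is
right rigid, i.e. admits a right dual `Σ` with evaluation `ev : Γ ⊗_A Σ → A` and
coevaluation `coev : A → Σ ⊗_A Γ` satisfying the triangle identities. -/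
theorem finite_projective_iff_rigid {k : Type*} {A Γ : Type u}
    [CommRing k] [Ring A] [Algebra k A] [AddCommGroup Γ] [Module A Γ] :
    (Module.Finite A Γ ∧ Module.Projective A Γ) ↔ Nonempty (RightDualData A Γ) :=
  finite_projective_iff_rigid_general

end Stmt5
end

section
/- Let H be a quasitriangular Hopf algebra with R-matrix R and let A be a left H-module algebra that is braided commutative: ab = (R̄ᵅ ▷ b)(R̄_α ▷ a) for all a,b ∈ A. Then every braided derivation u of A (i.e., k-linear u : A → A with u(ab) = u(a)b + (R̄ᵅ ▷ a)((R̄_α ▷ u)(b)), where ▷ on u is the adjoint action) satisfies, for any a ∈ A, that the map a·u defined by (a·u)(b) = a·u(b) is again a braided derivation. -/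
/-!
Expanding the adjoint action with the module-algebra axiom gives
`(h ▷ (a·u))(c) = (h₁ ▷ a)·(h₂ ▷ u)(c)`. Inverting the hexagon identity `(id ⊗ Δ)R = R₁₃R₁₂`
gives `(id ⊗ Δ)R⁻¹ = R̄₁₂R̄₁₃`, so `∑ (R̄ᵅ ▷ b)·(R̄_α ▷ (a·u))(c)` equals
`∑ (R̄ᵅR̄ᵝ ▷ b)·(R̄_α ▷ a)·(R̄_β ▷ u)(c)`, and braided commutativity turns this into
`a·∑ (R̄ᵝ ▷ b)·(R̄_β ▷ u)(c)`.
-/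

open scoped TensorProduct

theorem map_inverse_eq_mul_of_map_eq_mul {M N F : Type*} [Monoid M] [Monoid N] [FunLike F M N]
    [MonoidHomClass F M N] (φ ψ χ : F) {x y : M} (hxy : x * y = 1) (hyx : y * x = 1)
    (h : φ x = ψ x * χ x) : φ y = χ y * ψ y := by
  refine left_inv_eq_right_inv (a := φ x) ?_ ?_
  · rw [← map_mul, hyx, map_one]
  · rw [h, mul_assoc, ← mul_assoc (χ x), ← map_mul, hxy, map_one, one_mul, ← map_mul, hxy,
      map_one]

theorem TensorProduct.eq_apply_of_forall_sum_tmul {R M N P : Type*} [CommSemiring R]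
    [AddCommMonoid M] [AddCommMonoid N] [AddCommMonoid P] [Module R M] [Module R N] [Module R P]
    (Φ : M ⊗[R] N →ₗ[R] P) (x : M ⊗[R] N) (y : P)
    (h : ∀ (n : ℕ) (f : Fin n → M) (g : Fin n → N), x = ∑ i, f i ⊗ₜ g i →
      y = ∑ i, Φ (f i ⊗ₜ g i)) :
    y = Φ x := by
  obtain ⟨n, f, g, rfl⟩ := TensorProduct.exists_sum_tmul_eq x
  rw [h n f g rfl, map_sum]

section Hexagon

variable {R H : Type*} [CommSemiring R] [Semiring H] [Bialgebra R H]

theorem sum_tmul_comul_eq_of_inverse {ι ι' : Type*} [Fintype ι] [Fintype ι']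
    (r r' : ι → H) (rb rb' : ι' → H)
    (hinv₁ : (∑ i, r i ⊗ₜ[R] r' i) * (∑ j, rb j ⊗ₜ[R] rb' j) = 1)
    (hinv₂ : (∑ j, rb j ⊗ₜ[R] rb' j) * (∑ i, r i ⊗ₜ[R] r' i) = 1)
    (hhex : ∑ i, r i ⊗ₜ[R] Coalgebra.comul (R := R) (r' i)
      = ∑ i, ∑ j, (r i * r j) ⊗ₜ[R] (r' j ⊗ₜ[R] r' i)) :
    ∑ j, rb j ⊗ₜ[R] Coalgebra.comul (R := R) (rb' j)
      = ∑ i, ∑ j, (rb i * rb j) ⊗ₜ[R] (rb' i ⊗ₜ[R] rb' j) := by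
  let ι₁₂ := Algebra.TensorProduct.map (AlgHom.id R H)
    (Algebra.TensorProduct.includeLeft : H →ₐ[R] H ⊗[R] H)
  let ι₁₃ := Algebra.TensorProduct.map (AlgHom.id R H)
    (Algebra.TensorProduct.includeRight : H →ₐ[R] H ⊗[R] H)
  have key := map_inverse_eq_mul_of_map_eq_mul
    (Algebra.TensorProduct.map (AlgHom.id R H) (Bialgebra.comulAlgHom R H)) ι₁₃ ι₁₂ hinv₁ hinv₂
    (by simpa [ι₁₂, ι₁₃, Finset.sum_mul_sum] using hhex)
  simpa [ι₁₂, ι₁₃, Finset.sum_mul_sum] using key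

end Hexagon

namespace Stmt11

section ModuleAlgebra

variable {k H A : Type*} [CommSemiring k] [Semiring A] [Algebra k A]

section SMulMul

variable [Semiring H] [Module k H] [Module H A] [IsScalarTower k H A]
  {V W : Type*} [AddCommMonoid V] [Module k V] [AddCommMonoid W] [Module k W]

def smulMul (μ : A) (Φ : V →ₗ[k] A) : H ⊗[k] V →ₗ[k] A :=
  TensorProduct.lift <| LinearMap.mk₂ k (fun x v => (x • μ) * Φ v)
    (fun _ _ _ => by rw [add_smul, add_mul])
    (fun _ _ _ => by rw [smul_assoc, smul_mul_assoc])
    (fun _ _ _ => by rw [map_add, mul_add])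
    (fun _ _ _ => by rw [map_smul, mul_smul_comm])

@[simp]
theorem smulMul_tmul (μ : A) (Φ : V →ₗ[k] A) (x : H) (v : V) :
    smulMul μ Φ (x ⊗ₜ v) = (x • μ) * Φ v :=
  rfl

theorem smulMul_comp_lTensor (μ : A) (Φ : V →ₗ[k] A) (f : W →ₗ[k] V) :
    smulMul μ (Φ ∘ₗ f) = smulMul μ Φ ∘ₗ f.lTensor H :=
  TensorProduct.ext' fun _ _ => rfl

theorem smulMul_assoc_tmul (μ : A) (Φ : V ⊗[k] W →ₗ[k] A) (t : H ⊗[k] V) (w : W) :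
    smulMul μ Φ (TensorProduct.assoc k H V W (t ⊗ₜ w))
      = smulMul μ (Φ ∘ₗ (TensorProduct.mk k V W).flip w) t := by
  induction t with
  | zero => simp
  | tmul x v => rfl
  | add t t' ht ht' => simp only [TensorProduct.add_tmul, map_add, ht, ht']

end SMulMul

variable [Semiring H] [HopfAlgebra k H] [Module H A] [IsScalarTower k H A]

/-- The adjoint action is evaluated through this map: `(h ▷ L) c = adjointEval L c (Δ h)`. -/
def adjointEval (L : A →ₗ[k] A) (c : A) : H ⊗[k] H →ₗ[k] A :=
  TensorProduct.lift <| LinearMap.mk₂ k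
    (fun x y => x • L (HopfAlgebra.antipode k y • c))
    (fun _ _ _ => by rw [add_smul])
    (fun _ _ _ => by rw [smul_assoc])
    (fun _ _ _ => by rw [map_add, add_smul, map_add, smul_add])
    (fun _ _ _ => by rw [(HopfAlgebra.antipode k).map_smul, smul_assoc, L.map_smul, smul_comm])

@[simp]
theorem adjointEval_tmul (L : A →ₗ[k] A) (c : A) (x y : H) :
    adjointEval L c (x ⊗ₜ y) = x • L (HopfAlgebra.antipode k y • c) :=
  rfl

theorem adjointEval_mulLeft_comp_comul
    (hmul : ∀ (h : H) (a b : A),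
      h • (a * b) = smulMul a (LinearMap.id.smulRight b) (Coalgebra.comul (R := k) h))
    (a c : A) (L : A →ₗ[k] A) (h : H) :
    adjointEval (LinearMap.mulLeft k a ∘ₗ L) c (Coalgebra.comul h)
      = smulMul a (adjointEval L c ∘ₗ Coalgebra.comul) (Coalgebra.comul h) := by
  have hsplit : adjointEval (LinearMap.mulLeft k a ∘ₗ L) c
      = smulMul a (adjointEval L c) ∘ₗ (TensorProduct.assoc k H H H).toLinearMap
        ∘ₗ (Coalgebra.comul (R := k) (A := H)).rTensor H := by
    refine TensorProduct.ext' fun x y => ?_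
    simp only [adjointEval_tmul, LinearMap.comp_apply, LinearMap.mulLeft_apply,
      LinearMap.rTensor_tmul, LinearEquiv.coe_coe, smulMul_assoc_tmul, hmul]
    rfl
  rw [hsplit, smulMul_comp_lTensor]
  simp only [LinearMap.comp_apply, LinearEquiv.coe_coe, Coalgebra.coassoc_apply]

end ModuleAlgebra

variable {k H A : Type*} [CommRing k] [Ring H] [HopfAlgebra k H]
  [Ring A] [Algebra k A] [Module H A] [IsScalarTower k H A] [SMulCommClass k H A]

variable {ι' : Type} [Fintype ι']

/-- `u` is a braided derivation of `A`:
`u(ab) = u(a)b + (R̄ᵅ ▷ a)·((R̄_α ▷ u)(b))`, where `R⁻¹ = ∑ i, rb i ⊗ rb' i`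
and `act` is the Hopf adjoint action on `End_k(A)`. -/
def IsBraidedDer (rb rb' : ι' → H) (act : H → (A →ₗ[k] A) → (A →ₗ[k] A))
    (u : A →ₗ[k] A) : Prop :=
  ∀ a b : A, u (a * b) = u a * b + ∑ i, (rb i • a) * (act (rb' i) u) b

theorem braided_derivation_module_general
    {ι : Type} [Fintype ι] (r r' : ι → H) (rb rb' : ι' → H)
    (hinv₁ : (∑ i, r i ⊗ₜ[k] r' i) * (∑ j, rb j ⊗ₜ[k] rb' j) = 1)
    (hinv₂ : (∑ j, rb j ⊗ₜ[k] rb' j) * (∑ i, r i ⊗ₜ[k] r' i) = 1)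
    (hhex₂ : ∑ i, (r i) ⊗ₜ[k] (Coalgebra.comul (R := k) (r' i))
      = ∑ i, ∑ j, (r i * r j) ⊗ₜ[k] (r' j ⊗ₜ[k] r' i))
    -- `A` is a left `H`-module algebra
    (hma : ∀ (h : H) (a b : A) (n : ℕ) (h₁ h₂ : Fin n → H),
      Coalgebra.comul (R := k) h = ∑ i, h₁ i ⊗ₜ[k] h₂ i →
      h • (a * b) = ∑ i, (h₁ i • a) * (h₂ i • b))
    -- `A` is braided commutative
    (hbc : ∀ a b : A, a * b = ∑ i, (rb i • b) * (rb' i • a))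
    -- the Hopf adjoint action on `End_k(A)`
    (act : H → (A →ₗ[k] A) → (A →ₗ[k] A))
    (hact : ∀ (h : H) (L : A →ₗ[k] A) (a : A) (n : ℕ) (h₁ h₂ : Fin n → H),
      Coalgebra.comul (R := k) h = ∑ i, h₁ i ⊗ₜ[k] h₂ i →
      act h L a = ∑ i, h₁ i • L (HopfAlgebra.antipode (R := k) (h₂ i) • a))
    -- the claim
    (u : A →ₗ[k] A) (hu : IsBraidedDer rb rb' act u) (a : A) :
    IsBraidedDer rb rb' act (LinearMap.mulLeft k a ∘ₗ u) := by
  have hmul : ∀ (h : H) (a b : A),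
      h • (a * b) = smulMul a (LinearMap.id.smulRight b) (Coalgebra.comul (R := k) h) :=
    fun h a b => TensorProduct.eq_apply_of_forall_sum_tmul _ _ _ (hma h a b)
  have hadj : ∀ (h : H) (L : A →ₗ[k] A) (c : A),
      act h L c = adjointEval L c (Coalgebra.comul h) :=
    fun h L c => TensorProduct.eq_apply_of_forall_sum_tmul _ _ _ (hact h L c)
  intro b c
  let G : H ⊗[k] (H ⊗[k] H) →ₗ[k] A :=
    smulMul b (smulMul a (adjointEval u c ∘ₗ Coalgebra.comul))
  rw [LinearMap.comp_apply, hu b c, LinearMap.comp_apply, LinearMap.mulLeft_apply, mul_add,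
    ← mul_assoc]
  congr 1
  calc a * ∑ j, (rb j • b) * act (rb' j) u c
      = G (∑ i, ∑ j, (rb i * rb j) ⊗ₜ[k] (rb' i ⊗ₜ[k] rb' j)) := by
        have hbc' : ∀ x : H, a * (x • b) = ∑ i, ((rb i * x) • b) * (rb' i • a) := fun x => by
          simp only [hbc a, smul_smul]
        simp only [G, map_sum, smulMul_tmul, LinearMap.comp_apply, ← hadj, Finset.mul_sum]
        rw [Finset.sum_comm]
        refine Finset.sum_congr rfl fun j _ => ?_
        simp only [← mul_assoc, hbc', Finset.sum_mul]
    _ = G (∑ j, rb j ⊗ₜ[k] Coalgebra.comul (rb' j)) := by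
        rw [sum_tmul_comul_eq_of_inverse r r' rb rb' hinv₁ hinv₂ hhex₂]
    _ = ∑ j, (rb j • b) * act (rb' j) (LinearMap.mulLeft k a ∘ₗ u) c := by
        simp only [G, map_sum, smulMul_tmul, hadj, adjointEval_mulLeft_comp_comul hmul]

/-- Let `H` be a quasitriangular Hopf algebra with `R`-matrix
`R = ∑ i, r i ⊗ r' i`, `R⁻¹ = ∑ i, rb i ⊗ rb' i`, and let `A` be a left
`H`-module algebra which is braided commutative: `ab = (R̄ᵅ ▷ b)(R̄_α ▷ a)`.
Then for every braided derivation `u` of `A` and every `a ∈ A`, the map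
`a·u : b ↦ a·u(b)` is again a braided derivation. -/
theorem braided_derivation_module
    {ι : Type} [Fintype ι] (r r' : ι → H) (rb rb' : ι' → H)
    (hinv₁ : (∑ i, r i ⊗ₜ[k] r' i) * (∑ j, rb j ⊗ₜ[k] rb' j) = 1)
    (hinv₂ : (∑ j, rb j ⊗ₜ[k] rb' j) * (∑ i, r i ⊗ₜ[k] r' i) = 1)
    (hqcc : ∀ (h : H) (n : ℕ) (h₁ h₂ : Fin n → H),
      Coalgebra.comul (R := k) h = ∑ l, h₁ l ⊗ₜ[k] h₂ l →
      ∑ l, ∑ i, (h₂ l * r i) ⊗ₜ[k] (h₁ l * r' i)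
        = ∑ i, ∑ l, (r i * h₁ l) ⊗ₜ[k] (r' i * h₂ l))
    (hhex₁ : ∑ i, (Coalgebra.comul (R := k) (r i)) ⊗ₜ[k] (r' i)
      = ∑ i, ∑ j, (r i ⊗ₜ[k] r j) ⊗ₜ[k] (r' i * r' j))
    (hhex₂ : ∑ i, (r i) ⊗ₜ[k] (Coalgebra.comul (R := k) (r' i))
      = ∑ i, ∑ j, (r i * r j) ⊗ₜ[k] (r' j ⊗ₜ[k] r' i))
    -- `A` is a left `H`-module algebra
    (hma : ∀ (h : H) (a b : A) (n : ℕ) (h₁ h₂ : Fin n → H),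
      Coalgebra.comul (R := k) h = ∑ i, h₁ i ⊗ₜ[k] h₂ i →
      h • (a * b) = ∑ i, (h₁ i • a) * (h₂ i • b))
    (hmu : ∀ h : H, h • (1 : A) = algebraMap k A (Coalgebra.counit (R := k) h))
    -- `A` is braided commutative
    (hbc : ∀ a b : A, a * b = ∑ i, (rb i • b) * (rb' i • a))
    -- the Hopf adjoint action on `End_k(A)`
    (act : H → (A →ₗ[k] A) → (A →ₗ[k] A))
    (hact : ∀ (h : H) (L : A →ₗ[k] A) (a : A) (n : ℕ) (h₁ h₂ : Fin n → H),
      Coalgebra.comul (R := k) h = ∑ i, h₁ i ⊗ₜ[k] h₂ i →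
      act h L a = ∑ i, h₁ i • L (HopfAlgebra.antipode (R := k) (h₂ i) • a))
    -- the claim
    (u : A →ₗ[k] A) (hu : IsBraidedDer rb rb' act u) (a : A) :
    IsBraidedDer rb rb' act (LinearMap.mulLeft k a ∘ₗ u) :=
  braided_derivation_module_general r r' rb rb' hinv₁ hinv₂ hhex₂ hma hbc act hact u hu a

end Stmt11
end
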